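/- (Angular-momentum charge of Kerr–Vaidya spacetime.) Let a ≠ 0, r > 0, v ∈ ℝ, and let M : ℝ → ℝ be twice continuously differentiable with M(u) → 0 and M′(u) → 0 as u → −∞, and with M′ and M″ Lebesgue-integrable on (−∞, v]. Then −(1/(8π)) · ∫_{u ∈ (−∞,v]} ( ∫₀^{π} ( ∫₀^{2π} [ (a·sin³ϑ·(a²·(a²·cos²ϑ − r²) − r²·(ρ² + 2r²))/ρ⁴)·M′(u) + (a³·r·sin⁵ϑ/ρ²)·M″(u) ] dψ ) dϑ ) du = M(v)·a − M′(v)·( ((r² + a²)²/(2a²))·arctan(a/r) − r³/(2a) − 5·a·r/6 ). -/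

import Mathlib

noncomputable section

open Real MeasureTheory

/-- ρ² = r² + a²·cos²ϑ. -/
def rho2 (a r θ : ℝ) : ℝ := r ^ 2 + a ^ 2 * Real.cos θ ^ 2

lemma rho2_pos (a : ℝ) {r : ℝ} (hr : 0 < r) (θ : ℝ) : 0 < rho2 a r θ := by
  unfold rho2; positivity

lemma hasDerivAt_rho2 (a r θ : ℝ) :
    HasDerivAt (fun θ => rho2 a r θ) (a ^ 2 * (2 * Real.cos θ ^ 1 * (-Real.sin θ))) θ := by
  unfold rho2
  exact (((Real.hasDerivAt_cos θ).pow 2).const_mul (a ^ 2)).const_add (r ^ 2)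

lemma hasDerivAt_F1 {a : ℝ} (ha : a ≠ 0) {r : ℝ} (hr : 0 < r) (θ : ℝ) :
    HasDerivAt (fun θ => Real.cos θ *
        ((a ^ 2 - r ^ 2) + (a ^ 2 + r ^ 2) ^ 2 / rho2 a r θ) / a)
      (a * Real.sin θ ^ 3 *
        (a ^ 2 * (a ^ 2 * Real.cos θ ^ 2 - r ^ 2)
          - r ^ 2 * (rho2 a r θ + 2 * r ^ 2)) / rho2 a r θ ^ 2) θ := by
  have hne : rho2 a r θ ≠ 0 := (rho2_pos a hr θ).ne'
  have h1 : HasDerivAt (fun θ => (a ^ 2 - r ^ 2) + (a ^ 2 + r ^ 2) ^ 2 / rho2 a r θ)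
      ((0 * rho2 a r θ - (a ^ 2 + r ^ 2) ^ 2 * (a ^ 2 * (2 * Real.cos θ ^ 1 * (-Real.sin θ)))) / rho2 a r θ ^ 2) θ :=
    (((hasDerivAt_const θ ((a ^ 2 + r ^ 2) ^ 2)).div (hasDerivAt_rho2 a r θ) hne)).const_add _
  have h2 := ((Real.hasDerivAt_cos θ).mul h1).div_const a
  refine h2.congr_deriv (Eq.symm ?_)
  have hs : Real.sin θ ^ 3 = Real.sin θ * (1 - Real.cos θ ^ 2) := by
    rw [← Real.sin_sq]; ring
  rw [hs]
  unfold rho2 at *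
  field_simp
  ring

lemma hasDerivAt_F2 {a : ℝ} (ha : a ≠ 0) {r : ℝ} (hr : 0 < r) (θ : ℝ) :
    HasDerivAt (fun θ => -(a * r * Real.cos θ ^ 3) / 3 + r * (r ^ 2 + 2 * a ^ 2) * Real.cos θ / a
        - (r ^ 2 + a ^ 2) ^ 2 * Real.arctan (a * Real.cos θ / r) / a ^ 2)
      (a ^ 3 * r * Real.sin θ ^ 5 / rho2 a r θ) θ := by
  have hne : rho2 a r θ ≠ 0 := (rho2_pos a hr θ).ne'
  have h1p : 1 + (a * Real.cos θ / r) ^ 2 ≠ 0 := by positivity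
  have harc : HasDerivAt (fun θ => Real.arctan (a * Real.cos θ / r))
      ((1 / (1 + (a * Real.cos θ / r) ^ 2)) * (a * (-Real.sin θ) / r)) θ :=
    (Real.hasDerivAt_arctan _).comp θ (((Real.hasDerivAt_cos θ).const_mul a).div_const r)
  have h1 : HasDerivAt (fun θ => -(a * r * Real.cos θ ^ 3) / 3)
      (-(a * r * (3 * Real.cos θ ^ 2 * (-Real.sin θ))) / 3) θ := by
    exact ((((Real.hasDerivAt_cos θ).pow 3).const_mul (a * r)).neg).div_const 3
  have h2 : HasDerivAt (fun θ => r * (r ^ 2 + 2 * a ^ 2) * Real.cos θ / a)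
      (r * (r ^ 2 + 2 * a ^ 2) * (-Real.sin θ) / a) θ :=
    (((Real.hasDerivAt_cos θ).const_mul (r * (r ^ 2 + 2 * a ^ 2)))).div_const a
  have h3 := ((harc.const_mul ((r ^ 2 + a ^ 2) ^ 2)).div_const (a ^ 2))
  have h := (h1.add h2).sub h3
  refine h.congr_deriv (Eq.symm ?_)
  have hs : Real.sin θ ^ 5 = Real.sin θ * (1 - Real.cos θ ^ 2) ^ 2 := by
    rw [← Real.sin_sq]; ring
  rw [hs]
  unfold rho2 at *
  field_simp
  ring

lemma cont_g1 {a r : ℝ} (hr : 0 < r) :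
    Continuous (fun θ => a * Real.sin θ ^ 3 *
        (a ^ 2 * (a ^ 2 * Real.cos θ ^ 2 - r ^ 2)
          - r ^ 2 * (rho2 a r θ + 2 * r ^ 2)) / rho2 a r θ ^ 2) := by
  apply Continuous.div
  · unfold rho2; fun_prop
  · unfold rho2; fun_prop
  · exact fun x => pow_ne_zero 2 (rho2_pos a hr x).ne'

lemma cont_g2 {a r : ℝ} (hr : 0 < r) :
    Continuous (fun θ => a ^ 3 * r * Real.sin θ ^ 5 / rho2 a r θ) := by
  apply Continuous.div
  · fun_prop
  · unfold rho2; fun_prop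
  · exact fun x => (rho2_pos a hr x).ne'

lemma int_g1 {a : ℝ} (ha : a ≠ 0) {r : ℝ} (hr : 0 < r) :
    (∫ θ in (0:ℝ)..π, a * Real.sin θ ^ 3 *
        (a ^ 2 * (a ^ 2 * Real.cos θ ^ 2 - r ^ 2)
          - r ^ 2 * (rho2 a r θ + 2 * r ^ 2)) / rho2 a r θ ^ 2) = -4 * a := by
  rw [intervalIntegral.integral_eq_sub_of_hasDerivAt
    (fun x _ => hasDerivAt_F1 ha hr x) ((cont_g1 hr).intervalIntegrable 0 π)]
  have h2 : r ^ 2 + a ^ 2 ≠ 0 := by positivity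
  simp only [rho2, Real.cos_pi, Real.cos_zero]
  field_simp
  ring

lemma int_g2 {a : ℝ} (ha : a ≠ 0) {r : ℝ} (hr : 0 < r) :
    (∫ θ in (0:ℝ)..π, a ^ 3 * r * Real.sin θ ^ 5 / rho2 a r θ)
      = 2 * (r ^ 2 + a ^ 2) ^ 2 / a ^ 2 * Real.arctan (a / r)
        - 2 * r ^ 3 / a - 10 * a * r / 3 := by
  rw [intervalIntegral.integral_eq_sub_of_hasDerivAt
    (fun x _ => hasDerivAt_F2 ha hr x) ((cont_g2 hr).intervalIntegrable 0 π)]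
  simp only [Real.cos_pi, Real.cos_zero, mul_one, mul_neg_one]
  rw [show -a / r = -(a / r) by ring, Real.arctan_neg]
  field_simp
  ring

/-- Angular-momentum charge of Kerr–Vaidya spacetime:
`Q_φ = −(1/(8π))·∫_{Σ_r} I^a n_a dvol` for the current `I^a = G^{ab}φ_b` of the axial Killing
field `φ = ∂/∂ψ` equals
`M(v)·a − M′(v)·(((r²+a²)²/(2a²))·arctan(a/r) − r³/(2a) − 5ar/6)`. -/
theorem angular_momentum_noether_charge (a r v : ℝ) (ha : a ≠ 0) (hr : 0 < r)
    (M : ℝ → ℝ) (hM : ContDiff ℝ 2 M)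
    (hM0 : Filter.Tendsto M Filter.atBot (nhds 0))
    (hM'0 : Filter.Tendsto (deriv M) Filter.atBot (nhds 0))
    (hM'int : IntegrableOn (deriv M) (Set.Iic v))
    (hM''int : IntegrableOn (deriv (deriv M)) (Set.Iic v)) :
    -(1 / (8 * π)) *
        ∫ u in Set.Iic v,
          ∫ θ in (0:ℝ)..π, ∫ _ψ in (0:ℝ)..(2 * π),
            (a * Real.sin θ ^ 3 *
                (a ^ 2 * (a ^ 2 * Real.cos θ ^ 2 - r ^ 2)
                  - r ^ 2 * (rho2 a r θ + 2 * r ^ 2)) / rho2 a r θ ^ 2) * deriv M u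
              + a ^ 3 * r * Real.sin θ ^ 5 / rho2 a r θ * deriv (deriv M) u
      = M v * a
        - deriv M v *
          ((r ^ 2 + a ^ 2) ^ 2 / (2 * a ^ 2) * Real.arctan (a / r)
            - r ^ 3 / (2 * a) - 5 * a * r / 6) := by
  set K := 2 * (r ^ 2 + a ^ 2) ^ 2 / a ^ 2 * Real.arctan (a / r)
      - 2 * r ^ 3 / a - 10 * a * r / 3 with hK
  have key : ∀ u : ℝ,
      (∫ θ in (0:ℝ)..π, ∫ _ψ in (0:ℝ)..(2 * π),
          (a * Real.sin θ ^ 3 *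
              (a ^ 2 * (a ^ 2 * Real.cos θ ^ 2 - r ^ 2)
                - r ^ 2 * (rho2 a r θ + 2 * r ^ 2)) / rho2 a r θ ^ 2) * deriv M u
            + a ^ 3 * r * Real.sin θ ^ 5 / rho2 a r θ * deriv (deriv M) u)
        = 2 * π * (-4 * a * deriv M u + K * deriv (deriv M) u) := by
    intro u
    have hin : ∀ θ : ℝ,
        (∫ _ψ in (0:ℝ)..(2 * π),
          (a * Real.sin θ ^ 3 *
              (a ^ 2 * (a ^ 2 * Real.cos θ ^ 2 - r ^ 2)
                - r ^ 2 * (rho2 a r θ + 2 * r ^ 2)) / rho2 a r θ ^ 2) * deriv M u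
            + a ^ 3 * r * Real.sin θ ^ 5 / rho2 a r θ * deriv (deriv M) u)
        = 2 * π * ((a * Real.sin θ ^ 3 *
              (a ^ 2 * (a ^ 2 * Real.cos θ ^ 2 - r ^ 2)
                - r ^ 2 * (rho2 a r θ + 2 * r ^ 2)) / rho2 a r θ ^ 2) * deriv M u
            + a ^ 3 * r * Real.sin θ ^ 5 / rho2 a r θ * deriv (deriv M) u) := by
      intro θ
      rw [intervalIntegral.integral_const]
      rw [smul_eq_mul, sub_zero]
    simp only [hin]
    rw [intervalIntegral.integral_const_mul,
      intervalIntegral.integral_add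
        (((cont_g1 hr).fun_mul continuous_const).intervalIntegrable 0 π)
        (((cont_g2 hr).fun_mul continuous_const).intervalIntegrable 0 π),
      intervalIntegral.integral_mul_const, intervalIntegral.integral_mul_const,
      int_g1 ha hr, int_g2 ha hr]
  simp only [key]
  have hM1 : ContDiff ℝ 1 (deriv M) := by
    have h2 : ((2 : WithTop ℕ∞)) = 1 + 1 := by norm_num
    exact (contDiff_succ_iff_deriv.mp (h2 ▸ hM)).2.2
  have e1 : (∫ u in Set.Iic v, deriv M u) = M v - 0 :=
    integral_Iic_of_hasDerivAt_of_tendsto'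
      (fun x _ => ((hM.differentiable (by norm_num)) x).hasDerivAt) hM'int hM0
  have e2 : (∫ u in Set.Iic v, deriv (deriv M) u) = deriv M v - 0 :=
    integral_Iic_of_hasDerivAt_of_tendsto'
      (fun x _ => ((hM1.differentiable one_ne_zero) x).hasDerivAt) hM''int hM'0
  rw [MeasureTheory.integral_const_mul,
    MeasureTheory.integral_add (hM'int.const_mul (-4 * a)) (hM''int.const_mul K),
    MeasureTheory.integral_const_mul, MeasureTheory.integral_const_mul, e1, e2, hK]
  have hπ : (π : ℝ) ≠ 0 := Real.pi_ne_zero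
  field_simp
  ring
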